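/- arXiv:1910.06151 — 8 statements merged into one kernel-verified Lean document; each statement's English description precedes it below -/
import Mathlib

section
/- Let X ∈ ℂ^{m×n} and Y ∈ ℂ^{m×p}. Let p ∈ ℝ^m be a probability distribution satisfying p(k) ≥ ‖X(k,·)‖²/(φ‖X‖_F²) for all k (a φ-oversampled importance sampling distribution for X). Let S ∈ ℝ^{1×m} be the random matrix equal to e_k/√(p(k)) with probability p(k). Then E[‖X† S† S Y − X† Y‖_F²] ≤ φ ‖X‖_F² ‖Y‖_F². -/
open Matrix BigOperators

/-- Squared Frobenius norm of a matrix. -/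
noncomputable def frobSq {m n α : Type*} [Fintype m] [Fintype n] [Norm α]
    (A : Matrix m n α) : ℝ :=
  ∑ i, ∑ j, ‖A i j‖ ^ 2

/-!
With `S = e_k / √(p k)`, the sketched product `Xᴴ Sᴴ S Y` is `(p k)⁻¹ • X(k,·)ᴴ Y(k,·)`, whose
`p`-mean is `Xᴴ Y` (rows with `p k = 0` vanish by oversampling). Entrywise, a variance is at most
the second moment, and the second moment is `∑ₖ (p k)⁻¹ ‖X(k,·)‖² ‖Y(k,·)‖²`, in which oversampling
bounds each `(p k)⁻¹ ‖X(k,·)‖²` by `φ ‖X‖_F²`.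
-/

open scoped RealInnerProductSpace

theorem frobSq_nonneg {m n α : Type*} [Fintype m] [Fintype n] [Norm α] (A : Matrix m n α) :
    0 ≤ frobSq A := by
  unfold frobSq
  positivity

theorem sum_mul_frobSq_eq {ι m n α : Type*} [Fintype ι] [Fintype m] [Fintype n] [Norm α]
    (w : ι → ℝ) (A : ι → Matrix m n α) :
    ∑ k, w k * frobSq (A k) = ∑ i, ∑ j, ∑ k, w k * ‖A k i j‖ ^ 2 := by
  simp only [frobSq, Finset.mul_sum]
  rw [Finset.sum_comm]
  exact Finset.sum_congr rfl fun _ _ => Finset.sum_comm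

section Variance

variable {ι E : Type*} [Fintype ι] [NormedAddCommGroup E] [InnerProductSpace ℝ E]

theorem sum_mul_norm_sub_sq_eq (w : ι → ℝ) (hw : ∑ i, w i = 1) (a : ι → E) :
    ∑ i, w i * ‖a i - ∑ j, w j • a j‖ ^ 2
      = ∑ i, w i * ‖a i‖ ^ 2 - ‖∑ j, w j • a j‖ ^ 2 := by
  set b := ∑ j, w j • a j
  have hinner : ∑ i, w i * ⟪a i, b⟫ = ‖b‖ ^ 2 := by
    simp_rw [← real_inner_smul_left, ← sum_inner, b, real_inner_self_eq_norm_sq]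
  simp_rw [norm_sub_sq_real, mul_add, mul_sub, Finset.sum_add_distrib, Finset.sum_sub_distrib,
    ← Finset.sum_mul, hw, mul_left_comm _ (2 : ℝ), ← Finset.mul_sum, hinner]
  ring

theorem sum_mul_norm_sub_sq_le (w : ι → ℝ) (hw : ∑ i, w i = 1) (a : ι → E) :
    ∑ i, w i * ‖a i - ∑ j, w j • a j‖ ^ 2 ≤ ∑ i, w i * ‖a i‖ ^ 2 := by
  rw [sum_mul_norm_sub_sq_eq w hw]
  linarith [sq_nonneg ‖∑ j, w j • a j‖]

theorem sum_mul_frobSq_sub_le {m n : Type*} [Fintype m] [Fintype n] (w : ι → ℝ)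
    (hw : ∑ i, w i = 1) (A : ι → Matrix m n E) :
    ∑ k, w k * frobSq (A k - ∑ l, w l • A l) ≤ ∑ k, w k * frobSq (A k) := by
  simp only [sum_mul_frobSq_eq, Matrix.sub_apply, Matrix.sum_apply, Matrix.smul_apply]
  exact Finset.sum_le_sum fun i _ => Finset.sum_le_sum fun j _ =>
    sum_mul_norm_sub_sq_le w hw fun k => A k i j

end Variance

theorem frobSq_smul {m n 𝕜 α : Type*} [Fintype m] [Fintype n] [NormedField 𝕜]
    [SeminormedAddCommGroup α] [NormedSpace 𝕜 α] (c : 𝕜) (A : Matrix m n α) :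
    frobSq (c • A) = ‖c‖ ^ 2 * frobSq A := by
  simp only [frobSq, Matrix.smul_apply, norm_smul, mul_pow, Finset.mul_sum]

theorem frobSq_vecMulVec {m n α : Type*} [Fintype m] [Fintype n] [NormedRing α]
    [NormMulClass α] (u : m → α) (v : n → α) :
    frobSq (vecMulVec u v) = (∑ i, ‖u i‖ ^ 2) * ∑ j, ‖v j‖ ^ 2 := by
  simp only [frobSq, vecMulVec_apply, norm_mul, mul_pow, Finset.sum_mul_sum]

theorem conjTranspose_mul_eq_sum_vecMulVec {m n p α : Type*} [Fintype m] [NonUnitalSemiring α]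
    [StarRing α]
    (X : Matrix m n α) (Y : Matrix m p α) :
    Xᴴ * Y = ∑ k, vecMulVec (star (X k)) (Y k) := by
  ext i j
  simp [Matrix.mul_apply, Matrix.sum_apply, vecMulVec_apply]

theorem conjTranspose_sketch_mul_eq_smul_vecMulVec {m n p o α : Type*} [Fintype m]
    [DecidableEq m] [Fintype o] [Unique o] [CommSemiring α] [StarRing α] (X : Matrix m n α)
    (Y : Matrix m p α) (k : m) (c : α)
    (S : Matrix o m α) (hS : ∀ i j, S i j = if j = k then c else 0) :
    Xᴴ * Sᴴ * S * Y = (star c * c) • vecMulVec (star (X k)) (Y k) := by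
  ext i j
  simp [Matrix.mul_apply, hS, vecMulVec_apply, apply_ite star]
  ring

/-- If `frobSq X = 0` the hypothesis divides by zero and says nothing; then `X = 0` instead. -/
theorem rowNormSq_le_of_oversampled {m n α : Type*} [Fintype m] [Fintype n] [Norm α] {φ : ℝ}
    (hφ : 0 < φ) {X : Matrix m n α} {p : m → ℝ}
    (hover : ∀ k, (∑ j, ‖X k j‖ ^ 2) / (φ * frobSq X) ≤ p k) (k : m) :
    ∑ j, ‖X k j‖ ^ 2 ≤ p k * (φ * frobSq X) := by
  rcases (frobSq_nonneg X).eq_or_lt with hX | hX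
  · calc ∑ j, ‖X k j‖ ^ 2 ≤ frobSq X :=
          Finset.single_le_sum (f := fun k => ∑ j, ‖X k j‖ ^ 2) (fun _ _ => by positivity)
            (Finset.mem_univ k)
      _ = p k * (φ * frobSq X) := by rw [← hX, mul_zero, mul_zero]
  · rw [← div_le_iff₀ (by positivity)]
    exact hover k

theorem row_eq_zero_of_oversampled {m n α : Type*} [Fintype m] [Fintype n]
    [NormedAddCommGroup α] {φ : ℝ} (hφ : 0 < φ) {X : Matrix m n α} {p : m → ℝ}
    (hover : ∀ k, (∑ j, ‖X k j‖ ^ 2) / (φ * frobSq X) ≤ p k) {k : m} (hk : p k = 0) :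
    X k = 0 := by
  have hrow : ∑ j, ‖X k j‖ ^ 2 = 0 :=
    le_antisymm (by simpa [hk] using rowNormSq_le_of_oversampled hφ hover k) (by positivity)
  funext j
  simpa using (Finset.sum_eq_zero_iff_of_nonneg (fun _ _ => by positivity)).mp hrow j
    (Finset.mem_univ j)

theorem sum_smul_inv_smul_vecMulVec {m n p α : Type*} [Fintype m] [NonUnitalSemiring α]
    [StarRing α] [Module ℝ α] (w : m → ℝ) (X : Matrix m n α) (Y : Matrix m p α)
    (hX : ∀ k, w k = 0 → X k = 0) :
    ∑ k, w k • (w k)⁻¹ • vecMulVec (star (X k)) (Y k) = Xᴴ * Y := by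
  rw [conjTranspose_mul_eq_sum_vecMulVec]
  refine Finset.sum_congr rfl fun k _ => ?_
  by_cases hk : w k = 0
  · simp [hk, hX k hk]
  · rw [smul_smul, mul_inv_cancel₀ hk, one_smul]

theorem mul_frobSq_inv_smul_vecMulVec_le {m n α : Type*} [Fintype m] [Fintype n] [NormedRing α]
    [NormMulClass α] [NormedSpace ℝ α] {t B : ℝ} (ht : 0 ≤ t) (hB : 0 ≤ B) (u : m → α)
    (v : n → α) (hu : ∑ i, ‖u i‖ ^ 2 ≤ t * B) :
    t * frobSq (t⁻¹ • vecMulVec u v) ≤ B * ∑ j, ‖v j‖ ^ 2 := by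
  rw [frobSq_smul, frobSq_vecMulVec, Real.norm_eq_abs, abs_inv, abs_of_nonneg ht]
  rcases ht.eq_or_lt with rfl | ht
  · simp only [zero_mul]
    positivity
  calc t * ((t⁻¹) ^ 2 * ((∑ i, ‖u i‖ ^ 2) * ∑ j, ‖v j‖ ^ 2))
      = (t⁻¹ * ∑ i, ‖u i‖ ^ 2) * ∑ j, ‖v j‖ ^ 2 := by field_simp
    _ ≤ B * ∑ j, ‖v j‖ ^ 2 := by
        gcongr
        rwa [inv_mul_le_iff₀ ht]

/-- Key variance bound for approximate matrix multiplication with a single importance sample: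
if `p` is a `φ`-oversampled importance sampling distribution for the rows of `X`, and
`S k` is the `1 × m` sketch `e_k / √(p k)`, then
`E[‖Xᴴ Sᴴ S Y − Xᴴ Y‖_F²] ≤ φ ‖X‖_F² ‖Y‖_F²`. -/
theorem stmt0 {m n p' : ℕ} (φ : ℝ) (hφ : 1 ≤ φ)
    (X : Matrix (Fin m) (Fin n) ℂ) (Y : Matrix (Fin m) (Fin p') ℂ)
    (p : Fin m → ℝ) (hp0 : ∀ k, 0 ≤ p k) (hp1 : ∑ k, p k = 1)
    (hover : ∀ k, (∑ j, ‖X k j‖ ^ 2) / (φ * frobSq X) ≤ p k)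
    (S : Fin m → Matrix (Fin 1) (Fin m) ℂ)
    (hS : ∀ k i j, S k i j = if j = k then ((Real.sqrt (p k))⁻¹ : ℂ) else 0) :
    ∑ k, p k * frobSq (Xᴴ * (S k)ᴴ * S k * Y - Xᴴ * Y)
      ≤ φ * frobSq X * frobSq Y := by
  have hφ0 : 0 < φ := by linarith
  set V : Fin m → Matrix (Fin n) (Fin p') ℂ := fun k => vecMulVec (star (X k)) (Y k)
  have hsketch : ∀ k, Xᴴ * (S k)ᴴ * S k * Y = (p k)⁻¹ • V k := fun k => by
    have hc : star ((Real.sqrt (p k) : ℂ))⁻¹ * ((Real.sqrt (p k) : ℂ))⁻¹ = ((p k)⁻¹ : ℝ) := by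
      rw [star_inv₀, Complex.star_def, Complex.conj_ofReal, ← mul_inv, ← Complex.ofReal_mul,
        Real.mul_self_sqrt (hp0 k), Complex.ofReal_inv]
    rw [conjTranspose_sketch_mul_eq_smul_vecMulVec X Y k _ (S k) (hS k), hc, Complex.coe_smul]
  have hmean : ∑ k, p k • (p k)⁻¹ • V k = Xᴴ * Y :=
    sum_smul_inv_smul_vecMulVec p X Y fun k => row_eq_zero_of_oversampled hφ0 hover
  calc ∑ k, p k * frobSq (Xᴴ * (S k)ᴴ * S k * Y - Xᴴ * Y)
      = ∑ k, p k * frobSq ((p k)⁻¹ • V k - ∑ l, p l • (p l)⁻¹ • V l) := by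
        simp only [hsketch, hmean]
    _ ≤ ∑ k, p k * frobSq ((p k)⁻¹ • V k) := sum_mul_frobSq_sub_le p hp1 _
    _ ≤ ∑ k, φ * frobSq X * ∑ j, ‖Y k j‖ ^ 2 := Finset.sum_le_sum fun k _ =>
        mul_frobSq_inv_smul_vecMulVec_le (hp0 k) (by have := frobSq_nonneg X; positivity) _ _
          (by simpa using rowNormSq_le_of_oversampled hφ0 hover k)
    _ = φ * frobSq X * frobSq Y := (Finset.mul_sum _ _ _).symm
end

section
/- Let A ∈ ℂ^{m×n}, let p ∈ ℝ^m be a probability distribution with p(k) ≥ ‖A(k,·)‖²/(φ‖A‖_F²) for all k, and let S ∈ ℝ^{r×m} have r i.i.d. rows, each equal to e_k/√(r·p(k)) with probability p(k). Then ‖SA‖_F² ≤ φ‖A‖_F² holds surely, and moreover for every δ ∈ (0,1], with probability at least 1−δ one has |‖SA‖_F² − ‖A‖_F²| ≤ √(φ² ln(2/δ)/(2r)) · ‖A‖_F². -/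
/-!
Row `i` of `S A` is row `k = ks i` of `A` scaled by `1 / √(r p k)`, so `‖S A‖_F² = ∑ᵢ g (ks i)`
with `g k = ‖A(k,·)‖² / (r p k)`. Oversampling gives `0 ≤ g k ≤ φ ‖A‖_F² / r`, which yields the
sure bound, and `E g = ‖A‖_F² / r`. Hoeffding's inequality for the `r` independent terms `g (ks i)`,
each ranging over an interval of length `c = φ ‖A‖_F² / r`, bounds the probability of
`|‖S A‖_F² - ‖A‖_F²| ≥ t` by `2 exp (-2 t² / (r c²))`, which equals `δ` for the stated `t`.
-/

open Matrix BigOperators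
open scoped Classical

open MeasureTheory ProbabilityTheory Real

lemma measureReal_abs_sum_sub_integral_ge_le {Ω ι : Type*} {mΩ : MeasurableSpace Ω}
    {μ : Measure Ω} [IsProbabilityMeasure μ] {X : ι → Ω → ℝ} (h_indep : iIndepFun X μ)
    (s : Finset ι) (hm : ∀ i ∈ s, AEMeasurable (X i) μ) {a b : ℝ}
    (hX : ∀ i ∈ s, ∀ ω, X i ω ∈ Set.Icc a b) {ε : ℝ} (hε : 0 ≤ ε) :
    μ.real {ω | ε ≤ |∑ i ∈ s, (X i ω - μ[X i])|}
      ≤ 2 * exp (-2 * ε ^ 2 / (s.card * (b - a) ^ 2)) := by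
  have hsub : HasSubgaussianMGF (fun ω ↦ ∑ i ∈ s, (X i ω - μ[X i]))
      (∑ _i ∈ s, (‖b - a‖₊ / 2) ^ 2) μ :=
    HasSubgaussianMGF.sum_of_iIndepFun
      (h_indep.comp (fun i (x : ℝ) ↦ x - ∫ ω, X i ω ∂μ) fun i ↦ by fun_prop) fun i hi ↦
      hasSubgaussianMGF_of_mem_Icc (hm i hi) (ae_of_all _ (hX i hi))
  have hexp : -ε ^ 2 / (2 * ((∑ _i ∈ s, (‖b - a‖₊ / 2) ^ 2 : NNReal) : ℝ))
      = -2 * ε ^ 2 / (s.card * (b - a) ^ 2) := by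
    push_cast
    rw [Finset.sum_const, nsmul_eq_mul, Real.norm_eq_abs, div_pow, sq_abs]
    field_simp
  calc μ.real {ω | ε ≤ |∑ i ∈ s, (X i ω - μ[X i])|}
      ≤ μ.real ({ω | ε ≤ ∑ i ∈ s, (X i ω - μ[X i])}
          ∪ {ω | ε ≤ -∑ i ∈ s, (X i ω - μ[X i])}) := by
        refine measureReal_mono fun ω hω ↦ ?_
        simp only [Set.mem_ofPred_eq, Set.mem_union, le_abs'] at hω ⊢
        rcases hω with h | h
        · exact Or.inr (by linarith)
        · exact Or.inl h
    _ ≤ _ := measureReal_union_le _ _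
    _ ≤ 2 * exp (-2 * ε ^ 2 / (s.card * (b - a) ^ 2)) := by
        rw [two_mul, ← hexp]
        exact add_le_add (hsub.measure_ge_le hε) (hsub.neg.measure_ge_le hε)

section FiniteProduct

variable {ι α : Type*} [Fintype ι] [Fintype α] [MeasurableSpace α] [MeasurableSingletonClass α]

lemma measureReal_pi_setOf_eq_sum [DecidableEq ι] (ν : ι → Measure α)
    [∀ i, IsFiniteMeasure (ν i)] (Q : (ι → α) → Prop) [DecidablePred Q] :
    (Measure.pi ν).real {ω | Q ω} = ∑ ω, if Q ω then ∏ i, (ν i).real {ω i} else 0 := by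
  rw [← Finset.sum_filter, ← Finset.coe_filter_univ, ← sum_measureReal_singleton]
  simp [measureReal_def, ENNReal.toReal_prod]

lemma exists_isProbabilityMeasure_real_singleton {p : α → ℝ} (hp0 : ∀ a, 0 ≤ p a)
    (hp1 : ∑ a, p a = 1) : ∃ ν : Measure α, IsProbabilityMeasure ν ∧ ∀ a, ν.real {a} = p a := by
  let P := PMF.ofFintype (fun a ↦ ENNReal.ofReal (p a))
    (by rw [← ENNReal.ofReal_sum_of_nonneg fun a _ ↦ hp0 a, hp1, ENNReal.ofReal_one])
  refine ⟨P.toMeasure, inferInstance, fun a ↦ ?_⟩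
  rw [measureReal_def, P.toMeasure_apply_singleton a (measurableSet_singleton a),
    PMF.ofFintype_apply, ENNReal.toReal_ofReal (hp0 a)]

lemma integral_comp_eval_pi_eq_sum (ν : Measure α) [IsProbabilityMeasure ν] (g : α → ℝ) (i : ι) :
    ∫ ω, g (ω i) ∂(Measure.pi fun _ : ι ↦ ν) = ∑ a, ν.real {a} * g a := by
  rw [integral_comp_eval Measurable.of_discrete.aestronglyMeasurable, integral_fintype .of_finite]
  rfl

lemma measureReal_abs_sum_comp_eval_sub_ge_le (ν : Measure α) [IsProbabilityMeasure ν]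
    {g : α → ℝ} {c : ℝ} (hg : ∀ a, g a ∈ Set.Icc 0 c) {ε : ℝ} (hε : 0 ≤ ε) :
    (Measure.pi fun _ : ι ↦ ν).real
        {ω | ε ≤ |∑ i, g (ω i) - Fintype.card ι * ∑ a, ν.real {a} * g a|}
      ≤ 2 * exp (-2 * ε ^ 2 / (Fintype.card ι * c ^ 2)) := by
  have h := measureReal_abs_sum_sub_integral_ge_le
    (iIndepFun_pi (μ := fun _ : ι ↦ ν) (X := fun _ ↦ g) fun _ ↦ Measurable.of_discrete.aemeasurable)
    Finset.univ (fun _ _ ↦ Measurable.of_discrete.aemeasurable.comp_quasiMeasurePreserving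
      (Measure.quasiMeasurePreserving_eval _ _)) (fun _ _ ω ↦ hg (ω _)) hε
  simpa [integral_comp_eval_pi_eq_sum, Finset.sum_sub_distrib] using h

lemma measureReal_lt_abs_sum_comp_eval_sub_le [Nonempty ι] (ν : Measure α)
    [IsProbabilityMeasure ν] {g : α → ℝ} {φ F : ℝ} (hφ : 0 < φ) (hF : 0 ≤ F)
    (hg : ∀ a, g a ∈ Set.Icc 0 (φ * F / (Fintype.card ι : ℝ)))
    (hmean : (Fintype.card ι : ℝ) * ∑ a, ν.real {a} * g a = F) {δ : ℝ} (hδ0 : 0 < δ) (hδ1 : δ ≤ 1) :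
    (Measure.pi fun _ : ι ↦ ν).real
        {ω | √(φ ^ 2 * log (2 / δ) / (2 * Fintype.card ι)) * F < |∑ i, g (ω i) - F|} ≤ δ := by
  set r : ℝ := (Fintype.card ι : ℝ)
  have hr : 0 < r := Nat.cast_pos.2 Fintype.card_pos
  -- For `F = 0` the Hoeffding exponent divides by `c = 0`; but then `g = 0` and the event is empty.
  rcases hF.eq_or_lt with hF | hF
  · have hg0 : ∀ a, g a = 0 := fun a ↦ by
      have := hg a
      rw [← hF, mul_zero, zero_div] at this
      exact le_antisymm this.2 this.1
    simp [hg0, ← hF, hδ0.le]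
  have hlog : 0 ≤ log (2 / δ) := log_nonneg (by rw [le_div_iff₀ hδ0]; linarith)
  calc _ ≤ (Measure.pi fun _ : ι ↦ ν).real
        {ω | √(φ ^ 2 * log (2 / δ) / (2 * r)) * F ≤ |∑ i, g (ω i) - r * ∑ a, ν.real {a} * g a|} :=
        measureReal_mono fun ω h ↦ by
          simp only [hmean, Set.mem_ofPred_eq] at h ⊢
          exact h.le
    _ ≤ 2 * exp (-2 * (√(φ ^ 2 * log (2 / δ) / (2 * r)) * F) ^ 2 / (r * (φ * F / r) ^ 2)) :=
        measureReal_abs_sum_comp_eval_sub_ge_le ν hg (by positivity)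
    _ = δ := by
        rw [mul_pow, sq_sqrt (by positivity),
          show -2 * (φ ^ 2 * log (2 / δ) / (2 * r) * F ^ 2) / (r * (φ * F / r) ^ 2)
            = -log (2 / δ) by field_simp,
          exp_neg, exp_log (by positivity)]
        field_simp

end FiniteProduct

lemma one_sub_le_sum_ite_abs_sum_sub_le {ι α : Type*} [Fintype ι] [DecidableEq ι] [Nonempty ι]
    [Fintype α] {p : α → ℝ}
    (hp0 : ∀ a, 0 ≤ p a) (hp1 : ∑ a, p a = 1) {g : α → ℝ} {φ F : ℝ} (hφ : 0 < φ) (hF : 0 ≤ F)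
    (hg : ∀ a, g a ∈ Set.Icc 0 (φ * F / (Fintype.card ι : ℝ)))
    (hmean : (Fintype.card ι : ℝ) * ∑ a, p a * g a = F) {δ : ℝ} (hδ0 : 0 < δ) (hδ1 : δ ≤ 1) :
    1 - δ ≤ ∑ ω : ι → α,
      if |∑ i, g (ω i) - F| ≤ √(φ ^ 2 * log (2 / δ) / (2 * Fintype.card ι)) * F
      then ∏ i, p (ω i) else 0 := by
  let _ : MeasurableSpace α := ⊤
  obtain ⟨ν, _, hν⟩ := exists_isProbabilityMeasure_real_singleton hp0 hp1
  have hbad := measureReal_lt_abs_sum_comp_eval_sub_le (ι := ι) ν hφ hF hg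
    (by simpa only [hν] using hmean) hδ0 hδ1
  rw [← sub_le_sub_iff_left 1, ← probReal_compl_eq_one_sub .of_discrete, Set.compl_ofPred,
    measureReal_pi_setOf_eq_sum] at hbad
  simpa [hν] using hbad

lemma frobSq_mul_of_eq_ite_inv_sqrt {ι κ n : Type*} [Fintype ι] [Fintype κ] [Fintype n]
    [DecidableEq κ] (M : Matrix ι κ ℂ) (A : Matrix κ n ℂ) (sel : ι → κ) {q : κ → ℝ}
    (hq : ∀ k, 0 ≤ q k) (hM : ∀ i j, M i j = if j = sel i then ((√(q (sel i)))⁻¹ : ℂ) else 0) :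
    frobSq (M * A) = ∑ i, (∑ j, ‖A (sel i) j‖ ^ 2) / q (sel i) := by
  simp only [frobSq, Finset.sum_div]
  refine Finset.sum_congr rfl fun i _ ↦ Finset.sum_congr rfl fun j _ ↦ ?_
  simp [Matrix.mul_apply, hM, mul_pow, sq_sqrt (hq _), div_eq_inv_mul]

section Oversampling

variable {α : Type*} [Fintype α] {X p : α → ℝ} {φ : ℝ}

lemma le_mul_sum_mul_of_div_le (hX : ∀ k, 0 ≤ X k) (hφ : 0 < φ)
    (hover : ∀ k, X k / (φ * ∑ k, X k) ≤ p k) (k : α) :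
    X k ≤ φ * (∑ k, X k) * p k := by
  have hXk : X k ≤ ∑ k, X k := Finset.single_le_sum (fun k _ ↦ hX k) (Finset.mem_univ k)
  rcases (Finset.sum_nonneg fun k _ ↦ hX k).eq_or_lt with hF | hF
  · rw [← hF] at hXk ⊢
    simpa using hXk
  · rw [← div_le_iff₀' (by positivity)]
    exact hover k

lemma div_mul_le_of_div_le (hX : ∀ k, 0 ≤ X k) (hp0 : ∀ k, 0 ≤ p k) (hφ : 0 < φ)
    (hover : ∀ k, X k / (φ * ∑ k, X k) ≤ p k) {c : ℝ} (hc : 0 < c) (k : α) :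
    X k / (c * p k) ≤ φ * (∑ k, X k) / c := by
  rcases (hp0 k).eq_or_lt with hp | hp
  · rw [← hp, mul_zero, div_zero]
    exact div_nonneg (mul_nonneg hφ.le (Finset.sum_nonneg fun k _ ↦ hX k)) hc.le
  · rw [div_le_div_iff₀ (by positivity) hc]
    nlinarith [le_mul_sum_mul_of_div_le hX hφ hover k]

lemma sum_mul_div_mul_eq_of_div_le (hX : ∀ k, 0 ≤ X k) (hp0 : ∀ k, 0 ≤ p k) (hφ : 0 < φ)
    (hover : ∀ k, X k / (φ * ∑ k, X k) ≤ p k) {c : ℝ} (hc : 0 < c) :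
    ∑ k, p k * (X k / (c * p k)) = (∑ k, X k) / c := by
  rw [Finset.sum_div]
  refine Finset.sum_congr rfl fun k _ ↦ ?_
  rcases (hp0 k).eq_or_lt with hp | hp
  · have := le_mul_sum_mul_of_div_le hX hφ hover k
    rw [← hp, mul_zero] at this
    simp [← hp, le_antisymm this (hX k)]
  · field_simp

end Oversampling

/-- Frobenius norm bounds for importance sampling sketches: if `S ks` has `r` rows, row `i`
being `e_{ks i}/√(r p (ks i))` with the indices `ks i` drawn i.i.d. from a `φ`-oversampled
importance sampling distribution `p` for the rows of `A`, then surely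
`‖SA‖_F² ≤ φ‖A‖_F²`, and for every `δ ∈ (0,1]`, with probability at least `1−δ`,
`|‖SA‖_F² − ‖A‖_F²| ≤ √(φ² ln(2/δ)/(2r)) ‖A‖_F²`. -/
theorem stmt2 {m n r : ℕ} (hr : 0 < r) (φ : ℝ) (hφ : 1 ≤ φ)
    (A : Matrix (Fin m) (Fin n) ℂ)
    (p : Fin m → ℝ) (hp0 : ∀ k, 0 ≤ p k) (hp1 : ∑ k, p k = 1)
    (hover : ∀ k, (∑ j, ‖A k j‖ ^ 2) / (φ * frobSq A) ≤ p k)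
    (S : (Fin r → Fin m) → Matrix (Fin r) (Fin m) ℂ)
    (hS : ∀ ks i j, S ks i j = if j = ks i then ((Real.sqrt ((r : ℝ) * p (ks i)))⁻¹ : ℂ) else 0) :
    (∀ ks : Fin r → Fin m, frobSq (S ks * A) ≤ φ * frobSq A) ∧
    ∀ δ : ℝ, 0 < δ → δ ≤ 1 →
      1 - δ ≤ ∑ ks : Fin r → Fin m,
        if |frobSq (S ks * A) - frobSq A|
            ≤ Real.sqrt (φ ^ 2 * Real.log (2 / δ) / (2 * r)) * frobSq A
        then ∏ i, p (ks i) else 0 := by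
  have hφ0 : 0 < φ := by linarith
  have hr0 : (0 : ℝ) < r := Nat.cast_pos.2 hr
  have : Nonempty (Fin r) := ⟨⟨0, hr⟩⟩
  set X : Fin m → ℝ := fun k ↦ ∑ j, ‖A k j‖ ^ 2
  have hX : ∀ k, 0 ≤ X k := fun k ↦ Finset.sum_nonneg fun j _ ↦ by positivity
  set g : Fin m → ℝ := fun k ↦ X k / (r * p k)
  have hg : ∀ k, g k ∈ Set.Icc 0 (φ * frobSq A / r) := fun k ↦
    ⟨div_nonneg (hX k) (mul_nonneg hr0.le (hp0 k)), div_mul_le_of_div_le hX hp0 hφ0 hover hr0 k⟩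
  have hfrob (ks : Fin r → Fin m) : frobSq (S ks * A) = ∑ i, g (ks i) :=
    frobSq_mul_of_eq_ite_inv_sqrt _ A ks (fun k ↦ mul_nonneg hr0.le (hp0 k)) (hS ks)
  have hmean : (r : ℝ) * ∑ k, p k * g k = frobSq A := by
    rw [sum_mul_div_mul_eq_of_div_le hX hp0 hφ0 hover hr0, mul_div_cancel₀ _ hr0.ne']
    rfl
  refine ⟨fun ks ↦ ?_, fun δ hδ0 hδ1 ↦ ?_⟩
  · calc frobSq (S ks * A) ≤ (Finset.univ : Finset (Fin r)).card • (φ * frobSq A / r) :=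
          (hfrob ks).trans_le (Finset.sum_le_card_nsmul _ _ _ fun i _ ↦ (hg _).2)
      _ = φ * frobSq A := by
          rw [Finset.card_univ, Fintype.card_fin, nsmul_eq_mul, mul_div_cancel₀ _ hr0.ne']
  have h := one_sub_le_sum_ite_abs_sum_sub_le (ι := Fin r) (F := frobSq A) hp0 hp1 hφ0
    (Finset.sum_nonneg fun k _ ↦ hX k) (by rwa [Fintype.card_fin]) (by rwa [Fintype.card_fin])
    hδ0 hδ1
  simpa only [hfrob, Fintype.card_fin] using h
end

section
/- Let X ∈ ℂ^{m×n} and Y ∈ ℂ^{m×p}, and let p, q ∈ ℝ^m be φ₁- and φ₂-oversampled importance sampling distributions for X and Y respectively. Set r := (p+q)/2. Then r is a 2φ₁-oversampled distribution for X, a 2φ₂-oversampled distribution for Y, and r satisfies the joint oversampling condition r(k) ≥ ‖X(k,·)‖‖Y(k,·)‖/(φ Σ_ℓ ‖X(ℓ,·)‖‖Y(ℓ,·)‖) with φ = √(φ₁φ₂)‖X‖_F‖Y‖_F/Σ_ℓ ‖X(ℓ,·)‖‖Y(ℓ,·)‖. -/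
open Matrix BigOperators

/-- Euclidean norm of the `k`-th row of a matrix. -/
noncomputable def rowNorm {m n α : Type*} [Fintype n] [Norm α]
    (A : Matrix m n α) (k : m) : ℝ :=
  Real.sqrt (∑ j, ‖A k j‖ ^ 2)

/-- If `p` is a `φ₁`-oversampled importance sampling distribution for `X` and `q` a
`φ₂`-oversampled one for `Y`, then `r := (p+q)/2` is `2φ₁`-oversampled for `X`,
`2φ₂`-oversampled for `Y`, and satisfies the joint oversampling condition
`r k ≥ ‖X(k,·)‖‖Y(k,·)‖/(φ Σ_ℓ ‖X(ℓ,·)‖‖Y(ℓ,·)‖)` with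
`φ = √(φ₁φ₂)‖X‖_F‖Y‖_F / Σ_ℓ ‖X(ℓ,·)‖‖Y(ℓ,·)‖`. -/
theorem stmt4 {m n p' : ℕ} (φ₁ φ₂ : ℝ) (hφ₁ : 1 ≤ φ₁) (hφ₂ : 1 ≤ φ₂)
    (X : Matrix (Fin m) (Fin n) ℂ) (Y : Matrix (Fin m) (Fin p') ℂ)
    (p q : Fin m → ℝ)
    (hp0 : ∀ k, 0 ≤ p k) (hp1 : ∑ k, p k = 1)
    (hq0 : ∀ k, 0 ≤ q k) (hq1 : ∑ k, q k = 1)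
    (hpX : ∀ k, (∑ j, ‖X k j‖ ^ 2) / (φ₁ * frobSq X) ≤ p k)
    (hqY : ∀ k, (∑ j, ‖Y k j‖ ^ 2) / (φ₂ * frobSq Y) ≤ q k)
    (r : Fin m → ℝ) (hr : ∀ k, r k = (p k + q k) / 2) :
    (∀ k, (∑ j, ‖X k j‖ ^ 2) / (2 * φ₁ * frobSq X) ≤ r k) ∧
    (∀ k, (∑ j, ‖Y k j‖ ^ 2) / (2 * φ₂ * frobSq Y) ≤ r k) ∧
    (∀ k, rowNorm X k * rowNorm Y k /
        ((Real.sqrt (φ₁ * φ₂) * Real.sqrt (frobSq X) * Real.sqrt (frobSq Y) /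
            ∑ l, rowNorm X l * rowNorm Y l) *
          ∑ l, rowNorm X l * rowNorm Y l) ≤ r k) := by
  have hFX : 0 ≤ frobSq X :=
    Finset.sum_nonneg fun i _ => Finset.sum_nonneg fun j _ => by positivity
  have hFY : 0 ≤ frobSq Y :=
    Finset.sum_nonneg fun i _ => Finset.sum_nonneg fun j _ => by positivity
  have hr0 : ∀ k, 0 ≤ r k := fun k => by
    rw [hr k]; have := hp0 k; have := hq0 k; linarith
  have haX : ∀ k, ∑ j, ‖X k j‖ ^ 2 ≤ p k * (φ₁ * frobSq X) := by
    intro k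
    rcases eq_or_lt_of_le hFX with h0 | h0
    · have h1 : ∑ j, ‖X k j‖ ^ 2 ≤ frobSq X :=
        Finset.single_le_sum (f := fun i => ∑ j, ‖X i j‖ ^ 2)
          (fun i _ => Finset.sum_nonneg fun j _ => by positivity) (Finset.mem_univ k)
      rw [← h0] at h1 ⊢
      simpa using h1
    · exact (div_le_iff₀ (by positivity)).mp (hpX k)
  have haY : ∀ k, ∑ j, ‖Y k j‖ ^ 2 ≤ q k * (φ₂ * frobSq Y) := by
    intro k
    rcases eq_or_lt_of_le hFY with h0 | h0
    · have h1 : ∑ j, ‖Y k j‖ ^ 2 ≤ frobSq Y :=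
        Finset.single_le_sum (f := fun i => ∑ j, ‖Y i j‖ ^ 2)
          (fun i _ => Finset.sum_nonneg fun j _ => by positivity) (Finset.mem_univ k)
      rw [← h0] at h1 ⊢
      simpa using h1
    · exact (div_le_iff₀ (by positivity)).mp (hqY k)
  refine ⟨?_, ?_, ?_⟩
  · intro k
    have h2 : (∑ j, ‖X k j‖ ^ 2) / (2 * φ₁ * frobSq X)
        = (∑ j, ‖X k j‖ ^ 2) / (φ₁ * frobSq X) / 2 := by
      rw [div_div]; ring_nf
    rw [h2, hr k]
    have := hpX k; have := hq0 k; linarith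
  · intro k
    have h2 : (∑ j, ‖Y k j‖ ^ 2) / (2 * φ₂ * frobSq Y)
        = (∑ j, ‖Y k j‖ ^ 2) / (φ₂ * frobSq Y) / 2 := by
      rw [div_div]; ring_nf
    rw [h2, hr k]
    have := hqY k; have := hp0 k; linarith
  · intro k
    set S := ∑ l, rowNorm X l * rowNorm Y l with hSdef
    have hrowXnn : ∀ l, 0 ≤ rowNorm X l := fun l => Real.sqrt_nonneg _
    have hrowYnn : ∀ l, 0 ≤ rowNorm Y l := fun l => Real.sqrt_nonneg _
    by_cases hSz : S = 0
    · have hterm : rowNorm X k * rowNorm Y k = 0 := by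
        have := (Finset.sum_eq_zero_iff_of_nonneg
          (fun l _ => mul_nonneg (hrowXnn l) (hrowYnn l))).mp hSz k (Finset.mem_univ k)
        exact this
      rw [hterm]
      simpa using hr0 k
    · rw [div_mul_cancel₀ _ hSz]
      set D := Real.sqrt (φ₁ * φ₂) * Real.sqrt (frobSq X) * Real.sqrt (frobSq Y) with hDdef
      rcases eq_or_lt_of_le (show (0:ℝ) ≤ D from by positivity) with hD | hD
    
      · rw [← hD, div_zero]; exact hr0 k
      · rw [div_le_iff₀ hD]
        have h1 : rowNorm X k ≤ Real.sqrt (p k * (φ₁ * frobSq X)) :=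
          Real.sqrt_le_sqrt (haX k)
        have h2 : rowNorm Y k ≤ Real.sqrt (q k * (φ₂ * frobSq Y)) :=
          Real.sqrt_le_sqrt (haY k)
        have h3 : rowNorm X k * rowNorm Y k
            ≤ Real.sqrt (p k * (φ₁ * frobSq X)) * Real.sqrt (q k * (φ₂ * frobSq Y)) :=
          mul_le_mul h1 h2 (hrowYnn k) (Real.sqrt_nonneg _)
        have h4 : Real.sqrt (p k * (φ₁ * frobSq X)) * Real.sqrt (q k * (φ₂ * frobSq Y))
            = Real.sqrt (p k * q k) * D := by
          have hφ₁' : (0:ℝ) ≤ φ₁ := le_trans zero_le_one hφ₁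
          have hφ₂' : (0:ℝ) ≤ φ₂ := le_trans zero_le_one hφ₂
          rw [hDdef,
            ← Real.sqrt_mul (mul_nonneg hφ₁' hφ₂'),
            ← Real.sqrt_mul (mul_nonneg (mul_nonneg hφ₁' hφ₂') hFX),
            ← Real.sqrt_mul (mul_nonneg (hp0 k) (hq0 k)),
            ← Real.sqrt_mul (mul_nonneg (hp0 k) (mul_nonneg hφ₁' hFX))]
          congr 1
          ring
        have h5 : Real.sqrt (p k * q k) ≤ r k := by
          rw [hr k, Real.sqrt_mul (hp0 k)]
          nlinarith [sq_nonneg (Real.sqrt (p k) - Real.sqrt (q k)),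
            Real.sq_sqrt (hp0 k), Real.sq_sqrt (hq0 k)]
        calc rowNorm X k * rowNorm Y k ≤ Real.sqrt (p k * q k) * D := by rw [← h4]; exact h3
          _ ≤ r k * D := mul_le_mul_of_nonneg_right h5 (le_of_lt hD)
end

section
/- Let u, v ∈ ℂⁿ, let p ∈ ℝⁿ be a probability distribution with p(i) ≥ |u(i)|²/(φ‖u‖²) for all i, and let Z be the random variable obtained by sampling index i from p and setting Z := u(i)*·v(i)/p(i) (with the convention 0/0 = 0). Then E[Z] = ⟨u,v⟩ and E[|Z|²] ≤ φ‖u‖²‖v‖². -/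
open BigOperators

/-! Oversampling says `‖u i‖² ≤ φ ‖u‖² p i` for every `i`. In particular `u i = 0` wherever
`p i = 0`, so the junk value `Z i = 0` there costs nothing in the mean, and on the support of `p`
each term `p i ‖Z i‖² = ‖u i‖² ‖v i‖² / p i` is at most `φ ‖u‖² ‖v i‖²`. -/

lemma norm_sq_le_mul_sum_mul_of_div_le {ι E : Type*} [Fintype ι] [SeminormedAddCommGroup E]
    {φ : ℝ} (hφ : 0 < φ) (u : ι → E) (p : ι → ℝ) (i : ι)
    (hover : ‖u i‖ ^ 2 / (φ * ∑ j, ‖u j‖ ^ 2) ≤ p i) :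
    ‖u i‖ ^ 2 ≤ φ * (∑ j, ‖u j‖ ^ 2) * p i := by
  have hle : ‖u i‖ ^ 2 ≤ ∑ j, ‖u j‖ ^ 2 :=
    Finset.single_le_sum (f := fun j => ‖u j‖ ^ 2) (fun j _ => by positivity) (Finset.mem_univ i)
  rcases (hle.trans' (by positivity)).eq_or_lt with hS | hS
  · rw [← hS] at hle ⊢
    simpa using hle
  · rw [mul_comm _ (p i)]
    exact (div_le_iff₀ (by positivity)).mp hover

lemma mul_norm_div_ofReal_sq_le {z : ℂ} {p B : ℝ} (hp : 0 ≤ p) (hB : 0 ≤ B)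
    (h : ‖z‖ ^ 2 ≤ p * B) : p * ‖z / p‖ ^ 2 ≤ B := by
  rcases hp.eq_or_lt with rfl | hp
  · simpa using hB
  · calc p * ‖z / p‖ ^ 2 = ‖z‖ ^ 2 / p := by
          rw [norm_div, Complex.norm_real, Real.norm_of_nonneg hp.le]
          field_simp
      _ ≤ B := (div_le_iff₀' hp).mpr h

theorem stmt5_general {n : ℕ} (φ : ℝ) (hφ : 1 ≤ φ)
    (u v : Fin n → ℂ) (p : Fin n → ℝ)
    (hover : ∀ i, ‖u i‖ ^ 2 / (φ * ∑ j, ‖u j‖ ^ 2) ≤ p i)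
    (Z : Fin n → ℂ) (hZ : ∀ i, Z i = starRingEnd ℂ (u i) * v i / (p i : ℂ)) :
    (∑ i, (p i : ℂ) * Z i = ∑ i, starRingEnd ℂ (u i) * v i) ∧
    (∑ i, p i * ‖Z i‖ ^ 2 ≤ φ * (∑ i, ‖u i‖ ^ 2) * (∑ i, ‖v i‖ ^ 2)) := by
  set S := ∑ j, ‖u j‖ ^ 2
  have hφ0 : 0 < φ := one_pos.trans_le hφ
  have hdom i : ‖u i‖ ^ 2 ≤ φ * S * p i := norm_sq_le_mul_sum_mul_of_div_le hφ0 u p i (hover i)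
  have hp i : 0 ≤ p i := (hover i).trans' (by positivity)
  have hsupp i (hpi : (p i : ℂ) = 0) : starRingEnd ℂ (u i) * v i = 0 := by
    have : ‖u i‖ ^ 2 ≤ 0 := by simpa [Complex.ofReal_eq_zero.mp hpi] using hdom i
    simp [norm_eq_zero.mp (sq_nonpos_iff _ |>.mp this)]
  refine ⟨Finset.sum_congr rfl fun i _ => hZ i ▸ mul_div_cancel_of_imp' (hsupp i), ?_⟩
  calc ∑ i, p i * ‖Z i‖ ^ 2 ≤ ∑ i, φ * S * ‖v i‖ ^ 2 := by
        refine Finset.sum_le_sum fun i _ => hZ i ▸ mul_norm_div_ofReal_sq_le (hp i) (by positivity) ?_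
        calc ‖starRingEnd ℂ (u i) * v i‖ ^ 2 = ‖u i‖ ^ 2 * ‖v i‖ ^ 2 := by simp [mul_pow]
          _ ≤ φ * S * p i * ‖v i‖ ^ 2 := by gcongr; exact hdom i
          _ = p i * (φ * S * ‖v i‖ ^ 2) := by ring
    _ = φ * S * ∑ i, ‖v i‖ ^ 2 := (Finset.mul_sum ..).symm

/-- Single-sample inner product estimator: sampling `i` from a `φ`-oversampled importance
sampling distribution `p` for `u` and setting `Z i := u(i)* v(i) / p(i)` gives an unbiased
estimator of `⟨u,v⟩` with second moment at most `φ‖u‖²‖v‖²`. -/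
theorem stmt5 {n : ℕ} (φ : ℝ) (hφ : 1 ≤ φ)
    (u v : Fin n → ℂ) (p : Fin n → ℝ)
    (hp0 : ∀ i, 0 ≤ p i) (hp1 : ∑ i, p i = 1)
    (hover : ∀ i, ‖u i‖ ^ 2 / (φ * ∑ j, ‖u j‖ ^ 2) ≤ p i)
    (Z : Fin n → ℂ) (hZ : ∀ i, Z i = starRingEnd ℂ (u i) * v i / (p i : ℂ)) :
    (∑ i, (p i : ℂ) * Z i = ∑ i, starRingEnd ℂ (u i) * v i) ∧
    (∑ i, p i * ‖Z i‖ ^ 2 ≤ φ * (∑ i, ‖u i‖ ^ 2) * (∑ i, ‖v i‖ ^ 2)) :=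
  stmt5_general φ hφ u v p hover Z hZ
end

section
/- (Hoffman–Wielandt inequality) For symmetric matrices X, Y ∈ ℝ^{n×n}, the eigenvalues λ₁(X) ≥ … ≥ λₙ(X) and λ₁(Y) ≥ … ≥ λₙ(Y), arranged in decreasing order, satisfy Σᵢ (λᵢ(X) − λᵢ(Y))² ≤ ‖X − Y‖_F². -/
open Matrix BigOperators

open Finset

section Aux
variable {n : ℕ}

lemma antiMonovary {a b : Fin n → ℝ} (ha : Antitone a) (hb : Antitone b) :
    Monovary a b :=
  fun _i _j hlt => ha (le_of_not_ge fun hij => absurd (hb hij) (not_le.2 hlt))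

lemma ds_bound (a b : Fin n → ℝ) (ha : Antitone a) (hb : Antitone b)
    {S : Matrix (Fin n) (Fin n) ℝ} (hS : S ∈ doublyStochastic ℝ (Fin n)) :
    ∑ i, ∑ j, S i j * (a i * b j) ≤ ∑ i, a i * b i := by
  obtain ⟨w, hw0, hw1, hwS⟩ := exists_eq_sum_perm_of_mem_doublyStochastic hS
  have hperm : ∀ σ : Equiv.Perm (Fin n),
      ∑ i, ∑ j, (σ.permMatrix ℝ) i j * (a i * b j) = ∑ i, a i * b (σ i) := by
    intro σ
    refine Finset.sum_congr rfl fun i _ => ?_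
    rw [Finset.sum_eq_single (σ i)]
    · simp [Equiv.Perm.permMatrix, PEquiv.toMatrix_apply, Equiv.toPEquiv_apply]
    · intro j _ hj
      simp [Equiv.Perm.permMatrix, PEquiv.toMatrix_apply, Equiv.toPEquiv_apply, Ne.symm hj]
    · simp
  have hre : ∀ σ : Equiv.Perm (Fin n), ∑ i, a i * b (σ i) ≤ ∑ i, a i * b i := by
    intro σ
    have h1 := Equiv.sum_comp σ⁻¹ (fun i => a i * b (σ i))
    rw [← h1]
    simpa using (antiMonovary ha hb).sum_comp_perm_mul_le_sum_mul (σ := σ⁻¹)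
  have hentry : ∀ i j, S i j = ∑ σ : Equiv.Perm (Fin n), w σ * (σ.permMatrix ℝ) i j := by
    intro i j; rw [← hwS]; simp [Matrix.sum_apply, Equiv.Perm.permMatrix, PEquiv.toMatrix_apply, mul_ite, mul_one, mul_zero]
  calc ∑ i, ∑ j, S i j * (a i * b j)
      = ∑ i, ∑ σ : Equiv.Perm (Fin n), ∑ j, w σ * ((σ.permMatrix ℝ) i j * (a i * b j)) := by
        refine Finset.sum_congr rfl fun i _ => ?_
        rw [Finset.sum_comm]
        refine Finset.sum_congr rfl fun j _ => ?_
        rw [hentry i j, Finset.sum_mul]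
        exact Finset.sum_congr rfl fun σ _ => by ring
    _ = ∑ σ : Equiv.Perm (Fin n), w σ * ∑ i, ∑ j, (σ.permMatrix ℝ) i j * (a i * b j) := by
        rw [Finset.sum_comm]
        exact Finset.sum_congr rfl fun σ _ => by rw [Finset.mul_sum]; exact Finset.sum_congr rfl fun i _ => by rw [Finset.mul_sum]
    _ ≤ ∑ σ : Equiv.Perm (Fin n), w σ * ∑ i, a i * b i := by
        refine Finset.sum_le_sum fun σ _ => mul_le_mul_of_nonneg_left ?_ (hw0 σ)
        rw [hperm σ]; exact hre σ
    _ = ∑ i, a i * b i := by rw [← Finset.sum_mul, hw1, one_mul]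

end Aux

section Aux2
variable {n : ℕ}

lemma trace_conj_diag (α β : Fin n → ℝ) (W : Matrix (Fin n) (Fin n) ℝ) :
    Matrix.trace (diagonal α * W * diagonal β * star W)
      = ∑ i, ∑ j, (W i j) ^ 2 * (α i * β j) := by
  rw [Matrix.trace]
  refine Finset.sum_congr rfl fun i _ => ?_
  rw [Matrix.diag_apply, Matrix.mul_apply]
  refine Finset.sum_congr rfl fun j _ => ?_
  rw [Matrix.mul_diagonal, Matrix.diagonal_mul]
  simp only [Matrix.star_apply, star_trivial]
  ring

lemma trace_mul_eig {X Y : Matrix (Fin n) (Fin n) ℝ}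
    (hX : X.IsHermitian) (hY : Y.IsHermitian) :
    Matrix.trace (X * Y)
      = ∑ i, ∑ j, ((star (hX.eigenvectorUnitary : Matrix (Fin n) (Fin n) ℝ)
          * (hY.eigenvectorUnitary : Matrix (Fin n) (Fin n) ℝ)) i j) ^ 2
            * (hX.eigenvalues i * hY.eigenvalues j) := by
  set U := (hX.eigenvectorUnitary : Matrix (Fin n) (Fin n) ℝ) with hU
  set V := (hY.eigenvectorUnitary : Matrix (Fin n) (Fin n) ℝ) with hV
  have hXd : X = U * diagonal hX.eigenvalues * star U := by
    have := hX.spectral_theorem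
    simpa [RCLike.ofReal_real_eq_id, Function.id_comp] using this
  have hYd : Y = V * diagonal hY.eigenvalues * star V := by
    have := hY.spectral_theorem
    simpa [RCLike.ofReal_real_eq_id, Function.id_comp] using this
  have hsW : star (star U * V) = star V * U := by
    rw [Matrix.star_mul, star_star]
  calc Matrix.trace (X * Y)
      = Matrix.trace (U * (diagonal hX.eigenvalues * star U * (V * diagonal hY.eigenvalues * star V))) := by
        rw [show X * Y = U * (diagonal hX.eigenvalues * star U * (V * diagonal hY.eigenvalues * star V)) from by
          rw [show U * (diagonal hX.eigenvalues * star U * (V * diagonal hY.eigenvalues * star V))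
              = (U * diagonal hX.eigenvalues * star U) * (V * diagonal hY.eigenvalues * star V) from by
            simp only [Matrix.mul_assoc], ← hXd, ← hYd]]
    _ = Matrix.trace (diagonal hX.eigenvalues * star U * (V * diagonal hY.eigenvalues * star V) * U) :=
        Matrix.trace_mul_comm _ _
    _ = Matrix.trace (diagonal hX.eigenvalues * (star U * V) * diagonal hY.eigenvalues * star (star U * V)) := by
        rw [hsW]; simp only [Matrix.mul_assoc]
    _ = _ := trace_conj_diag _ _ _

end Aux2

/-- Hoffman–Wielandt inequality: for real symmetric matrices `X, Y`, if `a` and `b` list the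
eigenvalues of `X` and `Y` respectively in decreasing order, then
`Σᵢ (aᵢ − bᵢ)² ≤ ‖X − Y‖_F²`. -/
theorem stmt13 {n : ℕ} (X Y : Matrix (Fin n) (Fin n) ℝ)
    (hX : X.IsHermitian) (hY : Y.IsHermitian)
    (a b : Fin n → ℝ) (haA : Antitone a) (hbA : Antitone b)
    (ha : ∃ σ : Equiv.Perm (Fin n), ∀ i, a i = hX.eigenvalues (σ i))
    (hb : ∃ σ : Equiv.Perm (Fin n), ∀ i, b i = hY.eigenvalues (σ i)) :
    ∑ i, (a i - b i) ^ 2 ≤ frobSq (X - Y) := by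
  obtain ⟨σ, hσ⟩ := ha
  obtain ⟨τ, hτ⟩ := hb
  set U := (hX.eigenvectorUnitary : Matrix (Fin n) (Fin n) ℝ) with hUdef
  set V := (hY.eigenvectorUnitary : Matrix (Fin n) (Fin n) ℝ) with hVdef
  set W := star U * V with hWdef
  have hWmem : W ∈ Matrix.unitaryGroup (Fin n) ℝ :=
    mul_mem (Unitary.star_mem hX.eigenvectorUnitary.2) hY.eigenvectorUnitary.2
  have hWW : W * star W = 1 := Matrix.mem_unitaryGroup_iff.mp hWmem
  have hWW' : star W * W = 1 := Matrix.mem_unitaryGroup_iff'.mp hWmem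
  have hrow : ∀ i, ∑ j, (W i j) ^ 2 = 1 := by
    intro i
    have h := congrFun (congrFun hWW i) i
    rw [Matrix.mul_apply] at h
    simp only [Matrix.star_apply, star_trivial, Matrix.one_apply_eq] at h
    rw [← h]
    exact Finset.sum_congr rfl fun j _ => sq (W i j) ▸ (sq (W i j)).symm ▸ (pow_two (W i j))
  have hcol : ∀ j, ∑ i, (W i j) ^ 2 = 1 := by
    intro j
    have h := congrFun (congrFun hWW' j) j
    rw [Matrix.mul_apply] at h
    simp only [Matrix.star_apply, star_trivial, Matrix.one_apply_eq] at h
    rw [← h]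
    exact Finset.sum_congr rfl fun i _ => pow_two (W i j)
  set S : Matrix (Fin n) (Fin n) ℝ := Matrix.of fun i j => (W (σ i) (τ j)) ^ 2 with hSdef
  have hSds : S ∈ doublyStochastic ℝ (Fin n) := by
    rw [mem_doublyStochastic_iff_sum]
    refine ⟨fun i j => sq_nonneg _, fun i => ?_, fun j => ?_⟩
    · exact (Equiv.sum_comp τ fun j => (W (σ i) j) ^ 2).trans (hrow (σ i))
    · exact (Equiv.sum_comp σ fun i => (W i (τ j)) ^ 2).trans (hcol (τ j))
  have htr : Matrix.trace (X * Y) ≤ ∑ i, a i * b i := by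
    rw [trace_mul_eig hX hY]
    have hrw : ∑ i, ∑ j, (W i j) ^ 2 * (hX.eigenvalues i * hY.eigenvalues j)
        = ∑ i, ∑ j, S i j * (a i * b j) := by
      rw [← Equiv.sum_comp σ
        (fun i => ∑ j, (W i j) ^ 2 * (hX.eigenvalues i * hY.eigenvalues j))]
      refine Finset.sum_congr rfl fun i _ => ?_
      rw [← Equiv.sum_comp τ
        (fun j => (W (σ i) j) ^ 2 * (hX.eigenvalues (σ i) * hY.eigenvalues j))]
      exact Finset.sum_congr rfl fun j _ => by rw [hσ i, hτ j]; rfl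
    rw [hrw]
    exact ds_bound a b haA hbA hSds
  have diag_sum : ∀ (α : Fin n → ℝ) i,
      ∑ j, ((1 : Matrix (Fin n) (Fin n) ℝ) i j) ^ 2 * (α i * α j) = α i ^ 2 := by
    intro α i
    rw [Finset.sum_eq_single i]
    · simp [Matrix.one_apply_eq]; ring
    · intro j _ hj
      simp [Matrix.one_apply_ne (Ne.symm hj)]
    · simp
  have hXX : Matrix.trace (X * X) = ∑ i, a i ^ 2 := by
    rw [trace_mul_eig hX hX]
    have h1 : star U * U = 1 := Matrix.mem_unitaryGroup_iff'.mp hX.eigenvectorUnitary.2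
    rw [h1]
    calc ∑ i, ∑ j, ((1 : Matrix (Fin n) (Fin n) ℝ) i j) ^ 2
            * (hX.eigenvalues i * hX.eigenvalues j)
        = ∑ i, hX.eigenvalues i ^ 2 := Finset.sum_congr rfl fun i _ => diag_sum _ i
      _ = ∑ i, hX.eigenvalues (σ i) ^ 2 :=
          (Equiv.sum_comp σ (fun i => hX.eigenvalues i ^ 2)).symm
      _ = ∑ i, a i ^ 2 := Finset.sum_congr rfl fun i _ => by rw [hσ i]
  have hYY : Matrix.trace (Y * Y) = ∑ i, b i ^ 2 := by
    rw [trace_mul_eig hY hY]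
    have h1 : star V * V = 1 := Matrix.mem_unitaryGroup_iff'.mp hY.eigenvectorUnitary.2
    rw [h1]
    calc ∑ i, ∑ j, ((1 : Matrix (Fin n) (Fin n) ℝ) i j) ^ 2
            * (hY.eigenvalues i * hY.eigenvalues j)
        = ∑ i, hY.eigenvalues i ^ 2 := Finset.sum_congr rfl fun i _ => diag_sum _ i
      _ = ∑ i, hY.eigenvalues (τ i) ^ 2 :=
          (Equiv.sum_comp τ (fun i => hY.eigenvalues i ^ 2)).symm
      _ = ∑ i, b i ^ 2 := Finset.sum_congr rfl fun i _ => by rw [hτ i]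
  have hM : (X - Y).IsHermitian := hX.sub hY
  have hfrob : frobSq (X - Y) = Matrix.trace ((X - Y) * (X - Y)) := by
    rw [frobSq, Matrix.trace]
    refine Finset.sum_congr rfl fun i _ => ?_
    rw [Matrix.diag_apply, Matrix.mul_apply]
    refine Finset.sum_congr rfl fun j _ => ?_
    rw [Real.norm_eq_abs, sq_abs, show (X - Y) j i = (X - Y) i j from
      (star_trivial _).symm.trans (hM.apply i j)]
    ring
  have hexp : Matrix.trace ((X - Y) * (X - Y))
      = Matrix.trace (X * X) - 2 * Matrix.trace (X * Y) + Matrix.trace (Y * Y) := by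
    rw [sub_mul, mul_sub, mul_sub, Matrix.trace_sub, Matrix.trace_sub, Matrix.trace_sub,
      Matrix.trace_mul_comm Y X]
    ring
  have hsum : ∑ i, (a i - b i) ^ 2
      = ∑ i, a i ^ 2 - 2 * ∑ i, (a i * b i) + ∑ i, b i ^ 2 := by
    rw [Finset.mul_sum, ← Finset.sum_sub_distrib, ← Finset.sum_add_distrib]
    exact Finset.sum_congr rfl fun i _ => by ring
  linarith
end

section
/- Let p(x) be an odd polynomial of degree at most d (so p(x) = x·q(x²) for a polynomial q) with |p(x)| ≤ 1 for x ∈ [−1,1]. Then max_{x∈[0,1]} |q(x)| = O(d). -/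
/-!
For `y = √x ∈ (0, 1]` we have `q x = p y / y`, so it suffices to show `|p y| ≤ (π / 2) d y`.
The function `φ ↦ p (sin φ)` is a trigonometric polynomial of degree at most `d` bounded by `1`,
hence `d`-Lipschitz by Bernstein's inequality; as `p 0 = 0` this gives
`|p y| ≤ d · arcsin y ≤ (π / 2) d y`. The point `x = 0` follows by continuity.

Bernstein's inequality comes from M. Riesz's interpolation formula
`T' φ = (n / S) ∑_{k < 2n} (-1)^k w_k T (φ + t_k)`, with `t_k = (2k + 1)π / (2n)`,
`w_k = sin (t_k / 2)⁻²` and `S = ∑ w_k`, valid for trigonometric polynomials `T` of degree `≤ n`: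
since all `w_k > 0`, it bounds `‖T'‖` by `n ‖T‖`. By linearity it suffices to check it on
`e^{imφ}`, `|m| ≤ n`, i.e. to show `∑ (-1)^k w_k e^{imt_k} = imS / n`.
-/

open Complex Polynomial Set
open scoped Real

theorem eq_mul_apply_one_of_add_eq_two_mul {R : Type*} [CommRing R] {f : ℕ → R} {n : ℕ}
    (h0 : f 0 = 0) (h : ∀ j, j + 2 ≤ n → f (j + 2) + f j = 2 * f (j + 1)) {j : ℕ} (hj : j ≤ n) :
    f j = j * f 1 := by
  induction j using Nat.strong_induction_on with
  | _ j ih =>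
    match j, hj with
    | 0, _ => simpa using h0
    | 1, _ => simp
    | j + 2, hj =>
      rw [eq_sub_of_add_eq (h j hj), ih (j + 1) (by omega) (by omega), ih j (by omega) (by omega)]
      push_cast
      ring

noncomputable def trigPolynomials (n : ℕ) : Submodule ℂ (ℝ → ℂ) :=
  Submodule.span ℂ ((fun (m : ℤ) (φ : ℝ) => cexp (m * φ * I)) '' Icc (-n : ℤ) n)

namespace trigPolynomials

theorem exp_mem {n : ℕ} {m : ℤ} (hm : |m| ≤ n) :
    (fun φ : ℝ => cexp (m * φ * I)) ∈ trigPolynomials n :=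
  Submodule.subset_span ⟨m, abs_le.mp hm, rfl⟩

theorem mono {a b : ℕ} (h : a ≤ b) : trigPolynomials a ≤ trigPolynomials b := by
  refine Submodule.span_mono (image_mono (Icc_subset_Icc ?_ ?_)) <;> simpa using h

theorem one_mem (n : ℕ) : (1 : ℝ → ℂ) ∈ trigPolynomials n := by
  convert exp_mem (n := n) (m := 0) (by simp)
  simp

theorem mul_le (a b : ℕ) : trigPolynomials a * trigPolynomials b ≤ trigPolynomials (a + b) := by
  rw [trigPolynomials, trigPolynomials, Submodule.span_mul_span]
  refine Submodule.span_mono ?_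
  rintro _ ⟨_, ⟨m, hm, rfl⟩, _, ⟨m', hm', rfl⟩, rfl⟩
  refine ⟨m + m', ⟨by push_cast; linarith [hm.1, hm'.1], by push_cast; linarith [hm.2, hm'.2]⟩, ?_⟩
  ext φ
  simp only [Pi.mul_apply, ← Complex.exp_add]
  push_cast
  congr 1
  ring

theorem pow_mem {a : ℕ} {f : ℝ → ℂ} (hf : f ∈ trigPolynomials a) (j : ℕ) :
    f ^ j ∈ trigPolynomials (j * a) := by
  induction j with
  | zero => simpa using one_mem 0
  | succ j ih =>
    rw [pow_succ, Nat.succ_mul]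
    exact mul_le _ _ (Submodule.mul_mem_mul ih hf)

theorem sin_mem : (fun φ : ℝ => (Real.sin φ : ℂ)) ∈ trigPolynomials 1 := by
  have h : (fun φ : ℝ => (Real.sin φ : ℂ)) = (I / 2) • (fun φ : ℝ => cexp ((-1 : ℤ) * φ * I))
      - (I / 2) • (fun φ : ℝ => cexp ((1 : ℤ) * φ * I)) := by
    ext φ
    simp only [ofReal_sin, Complex.sin, neg_mul, Int.cast_neg, Int.cast_one, one_mul,
      Pi.sub_apply, Pi.smul_apply, smul_eq_mul]
    ring
  rw [h]
  exact Submodule.sub_mem _ (Submodule.smul_mem _ _ (exp_mem (by simp)))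
    (Submodule.smul_mem _ _ (exp_mem (by simp)))

theorem eval_sin_mem (p : ℝ[X]) :
    (fun φ : ℝ => ((p.eval (Real.sin φ) : ℝ) : ℂ)) ∈ trigPolynomials p.natDegree := by
  have h : (fun φ : ℝ => ((p.eval (Real.sin φ) : ℝ) : ℂ)) = ∑ j ∈ Finset.range (p.natDegree + 1),
      (p.coeff j : ℂ) • (fun φ : ℝ => (Real.sin φ : ℂ)) ^ j := by
    ext φ
    simp [eval_eq_sum_range]
  rw [h]
  refine Submodule.sum_mem _ fun j hj => Submodule.smul_mem _ _ (mono ?_ (pow_mem sin_mem j))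
  simpa [Nat.lt_succ_iff] using hj

end trigPolynomials

noncomputable def rieszNode (n k : ℕ) : ℝ := (2 * k + 1) * π / (2 * n)

noncomputable def rieszWeight (n k : ℕ) : ℝ := 1 / Real.sin (rieszNode n k / 2) ^ 2

noncomputable def rieszWeightSum (n : ℕ) : ℝ := ∑ k ∈ Finset.range (2 * n), rieszWeight n k

noncomputable def rieszCoeff (n : ℕ) (m : ℤ) : ℂ :=
  ∑ k ∈ Finset.range (2 * n), (-1) ^ k * rieszWeight n k * cexp (m * rieszNode n k * I)

noncomputable def rieszSum (n : ℕ) (f : ℝ → ℂ) (φ : ℝ) : ℂ :=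
  ∑ k ∈ Finset.range (2 * n), (-1) ^ k * rieszWeight n k * f (φ + rieszNode n k)

theorem rieszNode_half_mem {n k : ℕ} (hk : k < 2 * n) : rieszNode n k / 2 ∈ Ioo 0 π := by
  have hk' : (k : ℝ) + 1 ≤ 2 * n := by exact_mod_cast hk
  have hn : (0 : ℝ) < n := by linarith [(k.cast_nonneg : (0 : ℝ) ≤ k)]
  constructor
  · unfold rieszNode; positivity
  · rw [rieszNode, div_div, div_lt_iff₀ (by positivity)]
    nlinarith [Real.pi_pos]

theorem rieszWeight_pos {n k : ℕ} (hk : k < 2 * n) : 0 < rieszWeight n k := by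
  have := Real.sin_pos_of_pos_of_lt_pi (rieszNode_half_mem hk).1 (rieszNode_half_mem hk).2
  unfold rieszWeight; positivity

theorem rieszWeight_mul_exp_add_exp_sub_two {n k : ℕ} (hk : k < 2 * n) :
    (rieszWeight n k : ℂ) * (cexp (rieszNode n k * I) + cexp (-rieszNode n k * I) - 2) = -4 := by
  have hs : Complex.sin (rieszNode n k / 2) ≠ 0 := by
    rw [← Complex.ofReal_ofNat, ← Complex.ofReal_div, ← Complex.ofReal_sin]
    exact_mod_cast (Real.sin_pos_of_pos_of_lt_pi (rieszNode_half_mem hk).1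
      (rieszNode_half_mem hk).2).ne'
  have hcos := Complex.cos_two_mul' ((rieszNode n k : ℂ) / 2)
  rw [mul_div_cancel₀ _ two_ne_zero] at hcos
  rw [← Complex.two_cos, rieszWeight]
  push_cast
  field_simp
  linear_combination 2 * hcos + 2 * Complex.sin_sq_add_cos_sq ((rieszNode n k : ℂ) / 2)

theorem neg_one_pow_mul_exp_rieszNode {n : ℕ} (hn : n ≠ 0) (m : ℤ) (k : ℕ) :
    (-1) ^ k * cexp (m * rieszNode n k * I)
      = cexp (m * π / (2 * n) * I) * cexp ((m + n) * π / n * I) ^ k := by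
  rw [← Complex.exp_pi_mul_I, ← Complex.exp_nat_mul, ← Complex.exp_nat_mul, ← Complex.exp_add,
    ← Complex.exp_add, rieszNode]
  have : (n : ℂ) ≠ 0 := by exact_mod_cast hn
  congr 1
  push_cast
  field_simp
  ring

theorem sum_neg_one_pow_mul_exp_rieszNode {n : ℕ} {m : ℤ} (hm : |m| < n) :
    ∑ k ∈ Finset.range (2 * n), (-1) ^ k * cexp (m * rieszNode n k * I) = 0 := by
  have hn : n ≠ 0 := by rintro rfl; exact (abs_nonneg m).not_gt (by exact_mod_cast hm)
  set r := cexp ((m + n) * π / n * I)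
  have hr : r ^ (2 * n) = 1 := by
    rw [← Complex.exp_nat_mul]
    convert Complex.exp_int_mul_two_pi_mul_I (m + n) using 2
    field_simp
    push_cast
    ring
  have hr1 : r ≠ 1 := by
    intro h
    obtain ⟨j, hj⟩ := Complex.exp_eq_one_iff.mp h
    have hj' : ((m + n : ℤ) : ℂ) = ((j * (2 * n) : ℤ) : ℂ) := by
      have : (n : ℂ) ≠ 0 := by exact_mod_cast hn
      have : (π : ℂ) ≠ 0 := by exact_mod_cast Real.pi_ne_zero
      field_simp at hj
      push_cast
      linear_combination hj
    have hj'' : m + n = j * (2 * n) := by exact_mod_cast hj'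
    rw [abs_lt] at hm
    rcases lt_trichotomy j 0 with h | h | h <;> nlinarith
  rw [Finset.sum_congr rfl fun k _ => neg_one_pow_mul_exp_rieszNode hn m k, ← Finset.mul_sum,
    geom_sum_eq hr1, hr, sub_self, zero_div, mul_zero]

theorem rieszWeightSum_pos {n : ℕ} (hn : 0 < n) : 0 < rieszWeightSum n :=
  Finset.sum_pos (fun k hk => rieszWeight_pos (Finset.mem_range.mp hk)) (by simp; omega)

theorem rieszCoeff_add_one_add_rieszCoeff_sub_one {n : ℕ} {m : ℤ} (hm : |m| < n) :
    rieszCoeff n (m + 1) + rieszCoeff n (m - 1) = 2 * rieszCoeff n m := by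
  have hterm : ∀ k ∈ Finset.range (2 * n),
      (-1) ^ k * rieszWeight n k * cexp ((m + 1 : ℤ) * rieszNode n k * I)
        + (-1) ^ k * rieszWeight n k * cexp ((m - 1 : ℤ) * rieszNode n k * I)
        - 2 * ((-1) ^ k * rieszWeight n k * cexp (m * rieszNode n k * I))
      = -4 * ((-1) ^ k * cexp (m * rieszNode n k * I)) := by
    intro k hk
    rw [← rieszWeight_mul_exp_add_exp_sub_two (Finset.mem_range.mp hk)]
    push_cast
    simp only [add_mul, sub_mul, one_mul, Complex.exp_add, Complex.exp_sub, neg_mul,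
      Complex.exp_neg]
    ring
  have hsum := Finset.sum_congr rfl hterm
  rw [Finset.sum_sub_distrib, Finset.sum_add_distrib, ← Finset.mul_sum, ← Finset.mul_sum,
    sum_neg_one_pow_mul_exp_rieszNode hm, mul_zero] at hsum
  unfold rieszCoeff
  linear_combination hsum

theorem rieszNode_reflect {n k : ℕ} (hk : k < 2 * n) :
    rieszNode n (2 * n - 1 - k) = 2 * π - rieszNode n k := by
  have hn : (n : ℝ) ≠ 0 := Nat.cast_ne_zero.mpr (by omega)
  rw [rieszNode, rieszNode, Nat.cast_sub (by omega), Nat.cast_sub (by omega)]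
  field_simp
  push_cast
  ring

theorem rieszWeight_reflect {n k : ℕ} (hk : k < 2 * n) :
    rieszWeight n (2 * n - 1 - k) = rieszWeight n k := by
  rw [rieszWeight, rieszWeight, rieszNode_reflect hk,
    show (2 * π - rieszNode n k) / 2 = π - rieszNode n k / 2 by ring, Real.sin_pi_sub]

theorem rieszCoeff_neg (n : ℕ) (m : ℤ) : rieszCoeff n (-m) = -rieszCoeff n m := by
  rw [rieszCoeff, ← Finset.sum_range_reflect, rieszCoeff, ← Finset.sum_neg_distrib]
  refine Finset.sum_congr rfl fun k hk => ?_
  have hk := Finset.mem_range.mp hk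
  have hsign : (-1 : ℂ) ^ (2 * n - 1 - k) = -(-1) ^ k := by
    rcases Nat.even_or_odd k with he | ho
    · rw [he.neg_one_pow, (Nat.odd_iff.mpr (by have := Nat.even_iff.mp he; omega)).neg_one_pow]
    · rw [ho.neg_one_pow, (Nat.even_iff.mpr (by have := Nat.odd_iff.mp ho; omega)).neg_one_pow,
        neg_neg]
  have hexp : cexp ((-m : ℤ) * (2 * π - rieszNode n k : ℝ) * I) = cexp (m * rieszNode n k * I) := by
    rw [← mul_one (cexp (m * rieszNode n k * I)), ← Complex.exp_int_mul_two_pi_mul_I (-m),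
      ← Complex.exp_add]
    congr 1
    push_cast
    ring
  rw [rieszWeight_reflect hk, rieszNode_reflect hk, hsign, hexp]
  ring

theorem rieszCoeff_self (n : ℕ) : rieszCoeff n n = rieszWeightSum n * I := by
  rw [rieszCoeff, rieszWeightSum, Complex.ofReal_sum, Finset.sum_mul]
  refine Finset.sum_congr rfl fun k hk => ?_
  have hn : (n : ℂ) ≠ 0 := by
    have := Finset.mem_range.mp hk; exact_mod_cast (by omega : n ≠ 0)
  have hexp : cexp ((n : ℤ) * rieszNode n k * I) = (-1) ^ k * I := by
    rw [show ((n : ℤ) : ℂ) * rieszNode n k * I = (2 * k + 1 : ℕ) * (π / 2 * I) by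
        rw [rieszNode]; push_cast; field_simp,
      Complex.exp_nat_mul, Complex.exp_pi_div_two_mul_I, pow_succ, pow_mul, I_sq]
  have hsq : ((-1 : ℂ) ^ k) ^ 2 = 1 := by rw [← pow_mul, pow_mul', neg_one_sq, one_pow]
  rw [hexp]
  linear_combination (rieszWeight n k * I : ℂ) * hsq

theorem rieszCoeff_eq {n : ℕ} {m : ℤ} (hm : |m| ≤ n) :
    rieszCoeff n m = m * I * rieszWeightSum n / n := by
  rcases Nat.eq_zero_or_pos n with rfl | hn
  · simp [rieszCoeff]
  have hzero : rieszCoeff n 0 = 0 := by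
    simpa using CharZero.eq_neg_self_iff.mp (rieszCoeff_neg n 0)
  have hnat : ∀ j : ℕ, j ≤ n → rieszCoeff n j = j * rieszCoeff n 1 := by
    refine fun j hj => eq_mul_apply_one_of_add_eq_two_mul (f := fun j : ℕ => rieszCoeff n j)
      (by simpa using hzero) (fun i hi => ?_) hj
    have := rieszCoeff_add_one_add_rieszCoeff_sub_one (n := n) (m := i + 1)
      (by rw [abs_of_nonneg (by positivity)]; omega)
    push_cast at this ⊢
    simpa [add_assoc, one_add_one_eq_two] using this
  have hone : rieszCoeff n 1 = I * rieszWeightSum n / n := by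
    have := hnat n le_rfl
    rw [rieszCoeff_self] at this
    rw [eq_div_iff (by exact_mod_cast hn.ne')]
    linear_combination -this
  obtain ⟨j, rfl | rfl⟩ := Int.eq_nat_or_neg m
  · rw [hnat j (by simpa using hm), hone]
    push_cast; ring
  · rw [rieszCoeff_neg, hnat j (by simpa using hm), hone]
    push_cast; ring

theorem rieszSum_exp (n : ℕ) (m : ℤ) (φ : ℝ) :
    rieszSum n (fun ψ => cexp (m * ψ * I)) φ = cexp (m * φ * I) * rieszCoeff n m := by
  rw [rieszSum, rieszCoeff, Finset.mul_sum]
  refine Finset.sum_congr rfl fun k _ => ?_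
  push_cast
  rw [mul_add, add_mul, Complex.exp_add]
  ring

theorem norm_rieszSum_le (n : ℕ) {f : ℝ → ℂ} {M : ℝ} (hM : ∀ φ, ‖f φ‖ ≤ M) (φ : ℝ) :
    ‖rieszSum n f φ‖ ≤ rieszWeightSum n * M := by
  rw [rieszSum, rieszWeightSum, Finset.sum_mul]
  refine (norm_sum_le _ _).trans (Finset.sum_le_sum fun k hk => ?_)
  rw [norm_mul, norm_mul, norm_pow, norm_neg, norm_one, one_pow, one_mul, Complex.norm_real,
    Real.norm_of_nonneg (rieszWeight_pos (Finset.mem_range.mp hk)).le]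
  exact mul_le_mul_of_nonneg_left (hM _) (rieszWeight_pos (Finset.mem_range.mp hk)).le

theorem hasDerivAt_of_mem_trigPolynomials {n : ℕ} {f : ℝ → ℂ} (hf : f ∈ trigPolynomials n)
    (φ : ℝ) : HasDerivAt f (n / rieszWeightSum n * rieszSum n f φ) φ := by
  induction hf using Submodule.span_induction generalizing φ with
  | mem g hg =>
    obtain ⟨m, hm, rfl⟩ := hg
    have hm' : |m| ≤ n := abs_le.mpr hm
    have hd : HasDerivAt (fun ψ : ℝ => cexp (m * ψ * I)) (cexp (m * φ * I) * (m * I)) φ := by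
      simpa using (((hasDerivAt_id φ).ofReal_comp.const_mul (m : ℂ)).mul_const I).cexp
    refine hd.congr_deriv ?_
    rw [rieszSum_exp, rieszCoeff_eq hm']
    rcases Nat.eq_zero_or_pos n with rfl | hn
    · -- `m = 0`, and the junk value `n / rieszWeightSum n = 0 / 0 = 0` is harmless
      simp [abs_nonpos_iff.mp hm']
    · have hS : (rieszWeightSum n : ℂ) ≠ 0 := Complex.ofReal_ne_zero.mpr (rieszWeightSum_pos hn).ne'
      have hn' : (n : ℂ) ≠ 0 := by exact_mod_cast hn.ne'
      field_simp
  | zero => simp [rieszSum]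
  | add f g _ _ hf hg =>
    refine ((hf φ).add (hg φ)).congr_deriv ?_
    simp only [rieszSum, Pi.add_apply, mul_add, Finset.sum_add_distrib]
  | smul c f _ hf =>
    refine ((hf φ).const_smul c).congr_deriv ?_
    simp only [rieszSum, Pi.smul_apply, smul_eq_mul, Finset.mul_sum]
    exact Finset.sum_congr rfl fun k _ => by ring

theorem norm_sub_le_of_mem_trigPolynomials {n : ℕ} {f : ℝ → ℂ} (hf : f ∈ trigPolynomials n)
    {M : ℝ} (hM : ∀ φ, ‖f φ‖ ≤ M) (x y : ℝ) : ‖f x - f y‖ ≤ n * M * |x - y| := by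
  have hbound : ∀ φ, ‖n / rieszWeightSum n * rieszSum n f φ‖ ≤ n * M := by
    intro φ
    rcases Nat.eq_zero_or_pos n with rfl | hn
    · simp
    have hS := rieszWeightSum_pos hn
    rw [norm_mul, norm_div, Complex.norm_natCast, Complex.norm_real, Real.norm_of_nonneg hS.le]
    calc n / rieszWeightSum n * ‖rieszSum n f φ‖
        ≤ n / rieszWeightSum n * (rieszWeightSum n * M) := by
          gcongr; exact norm_rieszSum_le n hM φ
      _ = n * M := by field_simp
  simpa [Real.norm_eq_abs] using Convex.norm_image_sub_le_of_norm_hasDerivWithin_le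
    (fun φ _ => (hasDerivAt_of_mem_trigPolynomials hf φ).hasDerivWithinAt)
    (fun φ _ => hbound φ) convex_univ (mem_univ y) (mem_univ x)

theorem abs_eval_sin_sub_eval_sin_le (p : ℝ[X]) {M : ℝ}
    (hp : ∀ y ∈ Icc (-1 : ℝ) 1, |p.eval y| ≤ M) (a b : ℝ) :
    |p.eval (Real.sin a) - p.eval (Real.sin b)| ≤ p.natDegree * M * |a - b| := by
  have := norm_sub_le_of_mem_trigPolynomials (trigPolynomials.eval_sin_mem p)
    (fun φ => by simpa using hp _ ⟨Real.neg_one_le_sin φ, Real.sin_le_one φ⟩) a b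
  rwa [← Complex.ofReal_sub, Complex.norm_real, Real.norm_eq_abs] at this

theorem abs_eval_le_of_eval_zero_eq_zero (p : ℝ[X]) (h0 : p.eval 0 = 0) {M : ℝ}
    (hp : ∀ y ∈ Icc (-1 : ℝ) 1, |p.eval y| ≤ M) {y : ℝ} (hy : y ∈ Icc (0 : ℝ) 1) :
    |p.eval y| ≤ π / 2 * p.natDegree * M * y := by
  have hM : 0 ≤ M := (abs_nonneg _).trans (hp 0 ⟨by norm_num, by norm_num⟩)
  have harc0 : 0 ≤ Real.arcsin y := Real.arcsin_nonneg.mpr hy.1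
  have hsin : Real.sin (Real.arcsin y) = y := Real.sin_arcsin (by linarith [hy.1]) hy.2
  have harc : Real.arcsin y ≤ π / 2 * y := by
    have := Real.mul_le_sin harc0 (Real.arcsin_le_pi_div_two y)
    rw [hsin] at this
    calc Real.arcsin y = π / 2 * (2 / π * Real.arcsin y) := by field_simp
      _ ≤ π / 2 * y := by gcongr
  calc |p.eval y| = |p.eval (Real.sin (Real.arcsin y)) - p.eval (Real.sin 0)| := by
        rw [hsin, Real.sin_zero, h0, sub_zero]
    _ ≤ p.natDegree * M * |Real.arcsin y - 0| := abs_eval_sin_sub_eval_sin_le p hp _ _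
    _ ≤ p.natDegree * M * (π / 2 * y) := by
        rw [sub_zero, abs_of_nonneg harc0]; gcongr
    _ = π / 2 * p.natDegree * M * y := by ring

/-- Smoothness of odd bounded polynomials: there is an absolute constant `C` such that for
every odd polynomial `p(x) = x·q(x²)` of degree at most `d` with `|p| ≤ 1` on `[−1,1]`,
one has `|q| ≤ C d` on `[0,1]`. -/
theorem stmt16 : ∃ C : ℝ, 0 < C ∧ ∀ (d : ℕ) (p q : Polynomial ℝ),
    p.natDegree ≤ d → p = Polynomial.X * q.comp (Polynomial.X ^ 2) →
    (∀ x ∈ Set.Icc (-1 : ℝ) 1, |p.eval x| ≤ 1) →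
    ∀ x ∈ Set.Icc (0 : ℝ) 1, |q.eval x| ≤ C * (d : ℝ) := by
  refine ⟨2, two_pos, fun d p q hd hpq hp => ?_⟩
  have hpeval : ∀ y, p.eval y = y * q.eval (y ^ 2) := by simp [hpq]
  have hIoc : ∀ x ∈ Ioc (0 : ℝ) 1, |q.eval x| ≤ 2 * d := by
    rintro x ⟨hx0, hx1⟩
    have hy : 0 < √x := Real.sqrt_pos.mpr hx0
    have key := abs_eval_le_of_eval_zero_eq_zero p (by simp [hpeval]) hp
      ⟨hy.le, Real.sqrt_le_one.mpr hx1⟩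
    rw [hpeval, Real.sq_sqrt hx0.le, abs_mul, abs_of_pos hy, mul_one, mul_comm] at key
    have hdeg : (p.natDegree : ℝ) ≤ d := by exact_mod_cast hd
    calc |q.eval x| ≤ π / 2 * p.natDegree := le_of_mul_le_mul_right key hy
      _ ≤ 2 * d := by nlinarith [Real.pi_le_four, Real.pi_pos]
  have hclosed : IsClosed {x | |q.eval x| ≤ 2 * (d : ℝ)} :=
    isClosed_le (continuous_abs.comp q.continuous) continuous_const
  intro x hx
  rw [← closure_Ioc zero_ne_one] at hx
  exact hclosed.closure_subset_iff.mpr hIoc hx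
end

section
/- Let A ∈ ℂ^{m×n} with singular value decomposition A = Σᵢ σᵢ uᵢ vᵢ†, and let f : [0,∞) → ℂ with f(0) = 0. Define f̄(x) := f(x)/x for x > 0 and f̄(0) := 0. Then A† f̄(AA†) A = f(A†A), where for a Hermitian positive semidefinite matrix M with eigendecomposition M = Σᵢ λᵢ wᵢwᵢ†, g(M) := Σᵢ g(λᵢ) wᵢwᵢ†. -/
/-!
Both sides are polynomials in the respective Gram matrices: if `p` interpolates `f̄` on the
eigenvalues of `AAᴴ` and `AᴴA`, then `f̄(AAᴴ) = p(AAᴴ)` and, since `x f̄(x) = f(x)` (this is where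
`f(0) = 0` enters), `f(AᴴA) = (X p)(AᴴA)`. The intertwining relation `(AAᴴ) A = A (AᴴA)` passes to
polynomials, so `Aᴴ p(AAᴴ) A = AᴴA p(AᴴA)`.
-/

open Matrix BigOperators

/-- Eigenvalue transformation of a Hermitian matrix `M = Σᵢ λᵢ wᵢwᵢᴴ` by `g : ℝ → ℂ`:
`g(M) := Σᵢ g(λᵢ) wᵢwᵢᴴ`, defined via a unitary eigendecomposition. -/
noncomputable def hermFun {n : ℕ} {M : Matrix (Fin n) (Fin n) ℂ}
    (hM : M.IsHermitian) (g : ℝ → ℂ) : Matrix (Fin n) (Fin n) ℂ :=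
  (hM.eigenvectorUnitary : Matrix (Fin n) (Fin n) ℂ) *
    Matrix.diagonal (g ∘ hM.eigenvalues) *
    (hM.eigenvectorUnitary : Matrix (Fin n) (Fin n) ℂ)ᴴ

open Polynomial

namespace Matrix

theorem aeval_diagonal {n R : Type*} [Fintype n] [DecidableEq n] [CommSemiring R]
    (d : n → R) (p : R[X]) :
    aeval (diagonal d) p = diagonal fun i => p.eval (d i) := by
  rw [← diagonalAlgHom_apply (R := R), aeval_algHom_apply, diagonalAlgHom_apply]
  congr 1
  ext i
  simp

theorem aeval_mul_eq_mul_aeval {m n R : Type*} [Fintype m] [DecidableEq m] [Fintype n]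
    [DecidableEq n] [CommSemiring R] {X : Matrix m m R} {Y : Matrix n n R} {A : Matrix m n R}
    (h : X * A = A * Y) (p : R[X]) :
    aeval X p * A = A * aeval Y p := by
  have hpow : ∀ k : ℕ, X ^ k * A = A * Y ^ k := by
    intro k
    induction k with
    | zero => simp
    | succ k ih =>
      rw [pow_succ, pow_succ, Matrix.mul_assoc, h, ← Matrix.mul_assoc, ih, Matrix.mul_assoc]
  induction p using Polynomial.induction_on' with
  | add p q hp hq => rw [map_add, map_add, Matrix.add_mul, Matrix.mul_add, hp, hq]
  | monomial k c =>
    rw [aeval_monomial, aeval_monomial, ← Algebra.smul_def, ← Algebra.smul_def, Matrix.smul_mul,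
      Matrix.mul_smul, hpow]

end Matrix

theorem hermFun_eq_aeval {n : ℕ} {M : Matrix (Fin n) (Fin n) ℂ} (hM : M.IsHermitian)
    {g : ℝ → ℂ} {p : ℂ[X]} (hp : ∀ i, p.eval (hM.eigenvalues i : ℂ) = g (hM.eigenvalues i)) :
    hermFun hM g = aeval M p := by
  conv_rhs => rw [hM.spectral_theorem, aeval_algHom_apply, aeval_diagonal]
  rw [hermFun, Unitary.conjStarAlgAut_apply, star_eq_conjTranspose]
  congr
  funext i
  exact (hp i).symm

/-- Even singular value transformation identity: for `f` with `f(0) = 0` and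
`f̄(x) = f(x)/x` (with `f̄(0) = 0`), one has `Aᴴ f̄(AAᴴ) A = f(AᴴA)`. -/
theorem stmt17 {m n : ℕ} (A : Matrix (Fin m) (Fin n) ℂ)
    (f : ℝ → ℂ) (hf0 : f 0 = 0)
    (fbar : ℝ → ℂ) (hfbar : ∀ x, fbar x = if x = 0 then 0 else f x / x) :
    Aᴴ * hermFun (Matrix.isHermitian_mul_conjTranspose_self A) fbar * A
      = hermFun (Matrix.isHermitian_conjTranspose_mul_self A) f := by
  have hf : ∀ x : ℝ, (x : ℂ) * fbar x = f x := by
    intro x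
    rw [hfbar]
    split_ifs with hx
    · simp [hx, hf0]
    · exact mul_div_cancel₀ _ (Complex.ofReal_ne_zero.mpr hx)
  set hC := isHermitian_mul_conjTranspose_self A
  set hB := isHermitian_conjTranspose_mul_self A
  set s : Finset ℝ := Finset.univ.image hC.eigenvalues ∪ Finset.univ.image hB.eigenvalues
  obtain ⟨p, hp⟩ : ∃ p : ℂ[X], ∀ x ∈ s, p.eval (x : ℂ) = fbar x :=
    ⟨Lagrange.interpolate s Complex.ofReal fbar, fun x hx =>
      Lagrange.eval_interpolate_at_node _ Complex.ofReal_injective.injOn hx⟩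
  have hpC : hermFun hC fbar = aeval (A * Aᴴ) p := hermFun_eq_aeval hC fun i =>
    hp _ (Finset.mem_union_left _ (Finset.mem_image_of_mem _ (Finset.mem_univ i)))
  have hpB : hermFun hB f = aeval (Aᴴ * A) (X * p) := hermFun_eq_aeval hB fun j => by
    rw [eval_mul, eval_X,
      hp _ (Finset.mem_union_right _ (Finset.mem_image_of_mem _ (Finset.mem_univ j))), hf]
  rw [hpC, hpB, map_mul, aeval_X, Matrix.mul_assoc,
    aeval_mul_eq_mul_aeval (Matrix.mul_assoc A Aᴴ A), ← Matrix.mul_assoc]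
end

section
/- Let A, B ∈ ℂ^{n×n} be Hermitian and let f : ℝ → ℂ be L-Lipschitz on a set containing all eigenvalues of A and of B. Then ‖f(A) − f(B)‖_F ≤ L‖A − B‖_F, where f(M) denotes the eigenvalue transformation applied via a unitary eigendecomposition of M. -/
open Matrix BigOperators

/-!
Write `A = U Λ Uᴴ` and `B = V M Vᴴ` with `U, V` unitary, and put `W = UᴴV`. Since the Frobenius
norm is unitarily invariant, for every `g` the difference `g(A) - g(B)` has the same Frobenius norm
as `g(Λ) W - W g(M)`, whose squared norm is `Σᵢⱼ |g(λᵢ) - g(μⱼ)|² |Wᵢⱼ|²`. Applying this to `g = f`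
and to `g = id`, the two sides are weighted sums with the same weights `|Wᵢⱼ|²`, and the Lipschitz
bound compares them term by term.
-/

theorem Real.sqrt_sum_sq_mul_le_mul_sqrt {ι : Type*} (s : Finset ι) {L : ℝ} {a b w : ι → ℝ}
    (ha : ∀ i ∈ s, 0 ≤ a i) (hb : ∀ i ∈ s, 0 ≤ b i) (hw : ∀ i ∈ s, 0 ≤ w i)
    (hab : ∀ i ∈ s, a i ≤ L * b i) :
    √(∑ i ∈ s, a i ^ 2 * w i) ≤ L * √(∑ i ∈ s, b i ^ 2 * w i) := by
  rcases le_or_gt 0 L with hL | hL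
  · rw [← Real.sqrt_sq hL, ← Real.sqrt_mul (sq_nonneg L), Finset.mul_sum]
    refine Real.sqrt_le_sqrt (Finset.sum_le_sum fun i hi => ?_)
    rw [← mul_assoc, ← mul_pow]
    exact mul_le_mul_of_nonneg_right (pow_le_pow_left₀ (ha i hi) (hab i hi) 2) (hw i hi)
  · have hb0 : ∀ i ∈ s, b i = 0 := fun i hi => by
      nlinarith [ha i hi, hb i hi, hab i hi]
    have ha0 : ∀ i ∈ s, a i = 0 := fun i hi => by
      nlinarith [ha i hi, hab i hi, hb0 i hi]
    rw [Finset.sum_eq_zero fun i hi => by rw [ha0 i hi]; ring,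
      Finset.sum_eq_zero fun i hi => by rw [hb0 i hi]; ring]
    simp

section Frobenius

variable {m n : Type*} [Fintype m] [Fintype n]

theorem frobSq_eq_re_trace (M : Matrix m n ℂ) : frobSq M = (Mᴴ * M).trace.re := by
  simp only [frobSq, trace, diag, mul_apply, conjTranspose_apply, Complex.re_sum]
  rw [Finset.sum_comm]
  refine Finset.sum_congr rfl fun i _ => Finset.sum_congr rfl fun j _ => ?_
  rw [Complex.star_def, ← Complex.normSq_eq_conj_mul_self, Complex.normSq_eq_norm_sq,
    Complex.ofReal_re]

theorem frobSq_conjTranspose_mul_mul [DecidableEq m] [DecidableEq n] {U : Matrix m m ℂ}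
    {V : Matrix n n ℂ} (hU : U ∈ unitaryGroup m ℂ) (hV : V ∈ unitaryGroup n ℂ)
    (X : Matrix m n ℂ) : frobSq (Uᴴ * X * V) = frobSq X := by
  have hUU : U * Uᴴ = 1 := Unitary.mul_star_self_of_mem hU
  have hVV : V * Vᴴ = 1 := Unitary.mul_star_self_of_mem hV
  have hconj : (Uᴴ * X * V)ᴴ * (Uᴴ * X * V) = Vᴴ * (Xᴴ * X * V) := by
    simp only [conjTranspose_mul, conjTranspose_conjTranspose, ← Matrix.mul_assoc]
    rw [Matrix.mul_assoc _ U, hUU, Matrix.mul_one]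
  rw [frobSq_eq_re_trace, hconj, trace_mul_comm, Matrix.mul_assoc, hVV, Matrix.mul_one,
    frobSq_eq_re_trace]

theorem frobSq_diagonal_mul_sub_mul_diagonal [DecidableEq m] [DecidableEq n]
    (d : m → ℂ) (e : n → ℂ) (W : Matrix m n ℂ) :
    frobSq (diagonal d * W - W * diagonal e) = ∑ i, ∑ j, ‖d i - e j‖ ^ 2 * ‖W i j‖ ^ 2 := by
  refine Finset.sum_congr rfl fun i _ => Finset.sum_congr rfl fun j _ => ?_
  rw [Matrix.sub_apply, diagonal_mul, mul_diagonal, mul_comm (W i j), ← sub_mul, norm_mul,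
    mul_pow]

end Frobenius

theorem Matrix.conjTranspose_mul_sub_mul {n R : Type*} [Fintype n] [DecidableEq n] [CommRing R]
    [StarRing R] {U V : Matrix n n R} (hU : U ∈ unitaryGroup n R) (hV : V ∈ unitaryGroup n R)
    (D E : Matrix n n R) :
    Uᴴ * (U * D * Uᴴ - V * E * Vᴴ) * V = D * (Uᴴ * V) - (Uᴴ * V) * E := by
  have hUU : Uᴴ * U = 1 := Unitary.star_mul_self_of_mem hU
  have hVV : Vᴴ * V = 1 := Unitary.star_mul_self_of_mem hV
  rw [Matrix.mul_sub, Matrix.sub_mul]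
  congr 1
  · simp only [← mul_assoc, hUU, one_mul]
  · simp only [mul_assoc, hVV, mul_one]

theorem frobSq_conj_diagonal_sub_conj_diagonal {n : Type*} [Fintype n] [DecidableEq n]
    {U V : Matrix n n ℂ} (hU : U ∈ unitaryGroup n ℂ) (hV : V ∈ unitaryGroup n ℂ) (d e : n → ℂ) :
    frobSq (U * diagonal d * Uᴴ - V * diagonal e * Vᴴ)
      = ∑ i, ∑ j, ‖d i - e j‖ ^ 2 * ‖(Uᴴ * V) i j‖ ^ 2 := by
  rw [← frobSq_conjTranspose_mul_mul hU hV, Matrix.conjTranspose_mul_sub_mul hU hV,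
    frobSq_diagonal_mul_sub_mul_diagonal]

/-- Frobenius-norm Lipschitz bound for eigenvalue transformations: if `f` is `L`-Lipschitz
on a set containing all eigenvalues of the Hermitian matrices `A` and `B`, then
`‖f(A) − f(B)‖_F ≤ L ‖A − B‖_F`. -/
theorem stmt18 {n : ℕ} (L : ℝ) (A B : Matrix (Fin n) (Fin n) ℂ)
    (hA : A.IsHermitian) (hB : B.IsHermitian)
    (f : ℝ → ℂ) (s : Set ℝ)
    (hf : ∀ x ∈ s, ∀ y ∈ s, ‖f x - f y‖ ≤ L * |x - y|)
    (hAs : ∀ i, hA.eigenvalues i ∈ s) (hBs : ∀ i, hB.eigenvalues i ∈ s) :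
    Real.sqrt (frobSq (hermFun hA f - hermFun hB f))
      ≤ L * Real.sqrt (frobSq (A - B)) := by
  set U := (hA.eigenvectorUnitary : Matrix (Fin n) (Fin n) ℂ)
  set V := (hB.eigenvectorUnitary : Matrix (Fin n) (Fin n) ℂ)
  have hAB : A - B = U * diagonal (RCLike.ofReal ∘ hA.eigenvalues) * Uᴴ -
      V * diagonal (RCLike.ofReal ∘ hB.eigenvalues) * Vᴴ := by
    conv_lhs => rw [hA.spectral_theorem, hB.spectral_theorem]
    rfl
  have hU := hA.eigenvectorUnitary.2
  have hV := hB.eigenvectorUnitary.2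
  rw [hAB, hermFun, hermFun, frobSq_conj_diagonal_sub_conj_diagonal hU hV,
    frobSq_conj_diagonal_sub_conj_diagonal hU hV, ← Fintype.sum_prod_type',
    ← Fintype.sum_prod_type']
  refine Real.sqrt_sum_sq_mul_le_mul_sqrt _ (fun _ _ => norm_nonneg _)
    (fun _ _ => norm_nonneg _) (fun _ _ => by positivity) fun ⟨i, j⟩ _ => ?_
  simpa [← Complex.ofReal_sub, Complex.norm_real] using hf _ (hAs i) _ (hBs j)
end
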